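/- arXiv:2211.16446 — 2 statements merged into one kernel-verified Lean document; each statement's English description precedes it below -/
import Mathlib

section
/- If G is a finite simple graph on n vertices with minimum degree δ ≥ n/2, then every longest cycle C of G is a Hamilton cycle, i.e., the subgraph G − C is empty. -/
/-!
Take a longest path `P` from `x` to `y`. By maximality all neighbours of `x` and of `y` lie on
`P`, and since `deg x + deg y ≥ n > length P`, pigeonhole gives consecutive vertices `a b` of `P`
with `x ~ b` and `y ~ a`, so `P` closes up into a cycle through all its vertices. That cycle is
longer than every path; as `G` is connected (two non-adjacent vertices have a common neighbour),
an edge leaving it would give a longer path, so it is a Hamilton cycle. A longest cycle is then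
at least as long, hence also Hamiltonian.
-/

open SimpleGraph

/-- A "generalized cycle" of order `t` in a graph: a single vertex counts as a
cycle of order 1, an edge as a cycle of order 2, and otherwise a genuine cycle
on `t` distinct vertices. -/
def IsGenCycleOn {V : Type*} (G : SimpleGraph V) (t : ℕ) : Prop :=
  (t = 1 ∧ Nonempty V) ∨ (t = 2 ∧ ∃ u v, G.Adj u v) ∨
    (∃ (u : V) (c : G.Walk u u), c.IsCycle ∧ c.length = t)

/-- The order of a longest generalized cycle in `G` (0 if `G` has no vertices). -/
noncomputable def cbar {V : Type*} (G : SimpleGraph V) : ℕ :=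
  sSup {t | IsGenCycleOn G t}

/-- `G` is `k`-connected: more than `k` vertices, and removing fewer than `k`
vertices leaves a connected graph. -/
def KConnected {V : Type*} [Fintype V] (G : SimpleGraph V) (k : ℕ) : Prop :=
  k < Fintype.card V ∧
    ∀ S : Finset V, S.card < k → (G.induce ((↑S : Set V)ᶜ)).Connected

namespace SimpleGraph

open Finset

variable {V : Type*} {G : SimpleGraph V}

namespace Walk

theorem exists_eq_append_cons_of_mem_darts {x y : V} {P : G.Walk x y} {d : G.Dart}
    (hd : d ∈ P.darts) :
    ∃ (q : G.Walk x d.fst) (r : G.Walk d.snd y), P = q.append (cons d.adj r) := by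
  induction P with
  | nil => simp at hd
  | cons h p ih =>
    rcases List.mem_cons.mp hd with rfl | hd
    · exact ⟨nil, p, rfl⟩
    · obtain ⟨q, r, rfl⟩ := ih hd
      exact ⟨cons h q, r, rfl⟩

/-- Closing a path `x ⋯ a b ⋯ y` with the chords `x b` and `y a` into the cycle
`x b ⋯ y a ⋯ x`. -/
theorem IsPath.isCycle_cons_append_cons_reverse {x a b y : V} {q : G.Walk x a}
    {r : G.Walk b y} {hab : G.Adj a b} (hP : (q.append (cons hab r)).IsPath)
    (hlen : 2 ≤ (q.append (cons hab r)).length) (hxb : G.Adj x b) (hya : G.Adj y a) :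
    (cons hxb (r.append (cons hya q.reverse))).IsCycle := by
  have hnodup : (q.support ++ r.support).Nodup := by
    simpa [support_append] using hP.support_nodup
  obtain ⟨hq, hr, hdisj⟩ := List.nodup_append.mp hnodup
  have hpath : (r.append (cons hya q.reverse)).IsPath := by
    rw [isPath_def, support_append, support_cons, List.tail_cons, support_reverse]
    exact (List.perm_append_comm.trans ((List.reverse_perm _).append_right _)).nodup_iff.mpr
      hnodup
  refine (cons_isCycle_iff _ _).mpr ⟨hpath, fun he => ?_⟩
  simp only [edges_append, edges_cons, edges_reverse, List.mem_append, List.mem_cons,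
    List.mem_reverse] at he
  rcases he with he | he | he
  · exact hdisj x q.start_mem_support x (r.fst_mem_support_of_mem_edges he) rfl
  · rcases Sym2.eq_iff.mp he with ⟨rfl, -⟩ | ⟨rfl, rfl⟩
    · exact hdisj x q.start_mem_support x r.end_mem_support rfl
    · have hq0 := (isPath_iff_nil.mp ((isPath_def _).mpr hq)).length_eq_zero
      have hr0 := (isPath_iff_nil.mp ((isPath_def _).mpr hr)).length_eq_zero
      simp [hq0, hr0] at hlen
  · exact hdisj b (q.snd_mem_support_of_mem_edges he) b r.start_mem_support rfl

theorem IsCycle.exists_isPath_length_eq {u a b : V} {c : G.Walk u u} (hc : c.IsCycle)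
    (hb : b ∈ c.support) (ha : a ∉ c.support) (hab : G.Adj a b) :
    ∃ (w : V) (p : G.Walk a w), p.IsPath ∧ p.length = c.length := by
  classical
  obtain ⟨w, hbw, q, hq⟩ := not_nil_iff.mp (hc.rotate hb).not_nil
  have hc' := hq ▸ hc.rotate hb
  have hqc : ∀ z ∈ q.support, z ∈ c.support := fun z hz => by
    rw [← mem_support_rotate_iff c b hb, hq]
    exact List.mem_cons_of_mem _ hz
  refine ⟨w, cons hab q.reverse, ?_, ?_⟩
  · refine (cons_isPath_iff _ _).mpr ⟨((cons_isCycle_iff _ _).mp hc').1.reverse, fun ha' => ?_⟩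
    exact ha (hqc a (by simpa using ha'))
  · rw [← length_rotate c b hb, hq]
    simp

theorem IsCycle.length_le_card [Fintype V] {u : V} {c : G.Walk u u} (hc : c.IsCycle) :
    c.length ≤ Fintype.card V := by
  rw [← length_tail_add_one hc.not_nil]
  exact hc.isPath_tail.length_lt

theorem IsCycle.mem_support_of_length_gt {u : V} {c : G.Walk u u} (hG : G.Preconnected)
    (hc : c.IsCycle) (hlong : ∀ ⦃a b : V⦄ (Q : G.Walk a b), Q.IsPath → Q.length < c.length)
    (z : V) : z ∈ c.support := by
  by_contra hz
  obtain ⟨p⟩ := hG u z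
  obtain ⟨d, -, hdc, hdz⟩ := p.exists_boundary_dart {w | w ∈ c.support} c.start_mem_support hz
  obtain ⟨w, q, hq, hqlen⟩ := hc.exists_isPath_length_eq hdc hdz d.adj.symm
  exact (hlong q hq).ne hqlen

theorem IsCycle.isHamiltonianCycle_of_forall_mem_support [DecidableEq V] {u : V}
    {c : G.Walk u u} (hc : c.IsCycle) (h : ∀ z, z ∈ c.support) : c.IsHamiltonianCycle := by
  refine ⟨hc, hc.isPath_tail.isHamiltonian_of_mem fun z => ?_⟩
  by_cases hz : z = u
  · exact hz ▸ c.tail.end_mem_support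
  · rw [support_tail_of_not_nil c hc.not_nil]
    exact (List.mem_cons.mp (c.cons_tail_support ▸ h z)).resolve_left hz

section Degree

variable [DecidableEq V] {x y : V} {P : G.Walk x y}

theorem card_toFinset_darts_le : #P.darts.toFinset ≤ P.length :=
  (List.toFinset_card_le _).trans_eq P.length_darts

variable [G.LocallyFinite] [DecidableRel G.Adj]

theorem degree_le_card_filter_adj_snd (hx : ∀ w, G.Adj x w → w ∈ P.support) :
    G.degree x ≤ #{d ∈ P.darts.toFinset | G.Adj x d.snd} := by
  rw [← card_neighborFinset_eq_degree]
  refine card_le_card_of_surjOn (fun d : G.Dart => d.snd) fun w hw => ?_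
  rw [mem_coe, mem_neighborFinset] at hw
  have hw' : w ∈ x :: P.darts.map (·.snd) := P.cons_map_snd_darts ▸ hx w hw
  obtain ⟨d, hd, rfl⟩ := List.mem_map.mp ((List.mem_cons.mp hw').resolve_left hw.ne')
  exact ⟨d, by simp [hd, hw], rfl⟩

theorem degree_le_card_filter_adj_fst (hy : ∀ w, G.Adj y w → w ∈ P.support) :
    G.degree y ≤ #{d ∈ P.darts.toFinset | G.Adj y d.fst} := by
  rw [← card_neighborFinset_eq_degree]
  refine card_le_card_of_surjOn (fun d : G.Dart => d.fst) fun w hw => ?_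
  rw [mem_coe, mem_neighborFinset] at hw
  have hw' : w ∈ P.darts.map (·.fst) ++ [y] := P.map_fst_darts_append ▸ hy w hw
  obtain ⟨d, hd, rfl⟩ :=
    List.mem_map.mp ((List.mem_append.mp hw').resolve_right (by simpa using hw.ne'))
  exact ⟨d, by simp [hd, hw], rfl⟩

theorem degree_le_length (hx : ∀ w, G.Adj x w → w ∈ P.support) : G.degree x ≤ P.length :=
  (degree_le_card_filter_adj_snd hx).trans ((card_filter_le _ _).trans card_toFinset_darts_le)

/-- The neighbours of `x` mark the darts of `P` ending in them, those of `y` the darts starting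
in them; `P` has too few darts for the two sets to be disjoint. -/
theorem exists_mem_darts_adj_snd_adj_fst (hx : ∀ w, G.Adj x w → w ∈ P.support)
    (hy : ∀ w, G.Adj y w → w ∈ P.support) (hlen : P.length < G.degree x + G.degree y) :
    ∃ d ∈ P.darts, G.Adj x d.snd ∧ G.Adj y d.fst := by
  obtain ⟨d, hd⟩ := inter_nonempty_of_card_lt_card_add_card (filter_subset _ _)
    (filter_subset _ _) (card_toFinset_darts_le.trans_lt (hlen.trans_le
      (add_le_add (degree_le_card_filter_adj_snd hx) (degree_le_card_filter_adj_fst hy))))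
  simp only [mem_inter, mem_filter, List.mem_toFinset] at hd
  exact ⟨d, hd.1.1, hd.1.2, hd.2.2⟩

end Degree

structure IsLongestPath {x y : V} (P : G.Walk x y) : Prop where
  isPath : P.IsPath
  length_le ⦃a b : V⦄ (Q : G.Walk a b) : Q.IsPath → Q.length ≤ P.length

theorem IsLongestPath.reverse {x y : V} {P : G.Walk x y} (hP : P.IsLongestPath) :
    P.reverse.IsLongestPath :=
  ⟨hP.isPath.reverse, fun _ _ Q hQ => P.length_reverse ▸ hP.length_le Q hQ⟩

theorem IsLongestPath.mem_support_of_adj_start {x y w : V} {P : G.Walk x y}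
    (hP : P.IsLongestPath) (hw : G.Adj x w) : w ∈ P.support := by
  by_contra hwP
  have := hP.length_le _ ((cons_isPath_iff hw.symm P).mpr ⟨hP.isPath, hwP⟩)
  simp at this

theorem IsLongestPath.mem_support_of_adj_end {x y w : V} {P : G.Walk x y}
    (hP : P.IsLongestPath) (hw : G.Adj y w) : w ∈ P.support := by
  simpa using hP.reverse.mem_support_of_adj_start hw

end Walk

open Walk

theorem exists_isLongestPath [Finite V] [Nonempty V] :
    ∃ (x y : V) (P : G.Walk x y), P.IsLongestPath := by
  have := Fintype.ofFinite V
  let lengths : Set ℕ := {l | ∃ (a b : V) (Q : G.Walk a b), Q.IsPath ∧ Q.length = l}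
  have hbdd : BddAbove lengths := ⟨Fintype.card V, by
    rintro _ ⟨a, b, Q, hQ, rfl⟩
    exact hQ.length_lt.le⟩
  have hne : lengths.Nonempty := ⟨0, Classical.arbitrary V, _, nil, IsPath.nil, rfl⟩
  obtain ⟨x, y, P, hP, hlen⟩ := Nat.sSup_mem hne hbdd
  exact ⟨x, y, P, ⟨hP, fun a b Q hQ => hlen ▸ le_csSup hbdd ⟨a, b, Q, hQ, rfl⟩⟩⟩

theorem exists_adj_adj_of_card_le_degree_add_degree [Fintype V] [DecidableRel G.Adj]
    {a b : V} (hab : a ≠ b) (hnadj : ¬G.Adj a b)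
    (hdeg : Fintype.card V ≤ G.degree a + G.degree b + 1) : ∃ z, G.Adj a z ∧ G.Adj z b := by
  classical
  have : 2 ≤ Fintype.card V := card_pair hab ▸ card_le_univ _
  have hsub : ∀ c ∈ ({a, b} : Finset V), G.neighborFinset c ⊆ univ \ {a, b} := by
    intro c hc z hz
    rw [mem_neighborFinset] at hz
    simp only [mem_insert, mem_singleton] at hc
    rcases hc with rfl | rfl <;> aesop (add simp adj_comm)
  obtain ⟨z, hz⟩ := inter_nonempty_of_card_lt_card_add_card (hsub a (by simp)) (hsub b (by simp))
    (by
      rw [card_sdiff_of_subset (subset_univ _), card_univ, card_pair hab,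
        card_neighborFinset_eq_degree, card_neighborFinset_eq_degree]
      omega)
  rw [mem_inter, mem_neighborFinset, mem_neighborFinset] at hz
  exact ⟨z, hz.1, hz.2.symm⟩

theorem preconnected_of_card_le_two_mul_minDegree [Fintype V] [DecidableRel G.Adj]
    (hδ : Fintype.card V ≤ 2 * G.minDegree) : G.Preconnected := by
  intro a b
  by_cases hab : a = b
  · exact hab ▸ Reachable.refl a
  by_cases hadj : G.Adj a b
  · exact hadj.reachable
  have := G.minDegree_le_degree a
  have := G.minDegree_le_degree b
  obtain ⟨z, haz, hzb⟩ := exists_adj_adj_of_card_le_degree_add_degree hab hadj (by omega)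
  exact haz.reachable.trans hzb.reachable

/-- **Dirac's theorem**. -/
theorem isHamiltonian_of_card_le_two_mul_minDegree [Fintype V] [DecidableEq V]
    [DecidableRel G.Adj] (h3 : 3 ≤ Fintype.card V) (hδ : Fintype.card V ≤ 2 * G.minDegree) :
    G.IsHamiltonian := by
  have : Nonempty V := Fintype.card_pos_iff.mp (by omega)
  have hdeg (z : V) : Fintype.card V ≤ 2 * G.degree z :=
    hδ.trans (Nat.mul_le_mul_left 2 (G.minDegree_le_degree z))
  obtain ⟨x, y, P, hP⟩ := G.exists_isLongestPath
  have hx : ∀ w, G.Adj x w → w ∈ P.support := fun _ => hP.mem_support_of_adj_start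
  have hy : ∀ w, G.Adj y w → w ∈ P.support := fun _ => hP.mem_support_of_adj_end
  obtain ⟨d, hd, hxd, hyd⟩ := exists_mem_darts_adj_snd_adj_fst hx hy (by
    have := hP.isPath.length_lt; have := hdeg x; have := hdeg y; omega)
  obtain ⟨q, r, rfl⟩ := exists_eq_append_cons_of_mem_darts hd
  have hc := hP.isPath.isCycle_cons_append_cons_reverse (by
    have := degree_le_length hx; have := hdeg x; omega) hxd hyd
  have hlong : ∀ ⦃a b : V⦄ (Q : G.Walk a b), Q.IsPath →
      Q.length < (cons hxd (r.append (cons hyd q.reverse))).length :=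
    fun a b Q hQ => (hP.length_le Q hQ).trans_lt (by simp; omega)
  exact fun _ => ⟨x, _, hc.isHamiltonianCycle_of_forall_mem_support
    (hc.mem_support_of_length_gt (preconnected_of_card_le_two_mul_minDegree hδ) hlong)⟩

end SimpleGraph

theorem stmt_1_general {V : Type*} [Fintype V] (G : SimpleGraph V)
    [DecidableRel G.Adj]
    (hδ : (Fintype.card V : ℚ) / 2 ≤ (G.minDegree : ℚ))
    (v : V) (C : G.Walk v v) (hC : C.IsCycle)
    (hmax : ∀ (u : V) (Q : G.Walk u u), Q.IsCycle → Q.length ≤ C.length) :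
    ∀ x : V, x ∈ C.support := by
  classical
  have hδ' : Fintype.card V ≤ 2 * G.minDegree := by
    rw [div_le_iff₀ two_pos] at hδ
    exact_mod_cast hδ.trans_eq (mul_comm _ _)
  have h3 : 3 ≤ Fintype.card V := hC.three_le_length.trans hC.length_le_card
  obtain ⟨u, c, hc⟩ := isHamiltonian_of_card_le_two_mul_minDegree h3 hδ' (by omega)
  have hCham : C.IsHamiltonianCycle := Walk.isHamiltonianCycle_iff_isCycle_and_length_eq.mpr
    ⟨hC, hC.length_le_card.antisymm (hc.length_eq ▸ hmax u c hc.isCycle)⟩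
  exact hCham.mem_support

/-- Dirac: if `δ ≥ n/2` then every longest cycle is a Hamilton cycle. -/
theorem stmt_1 {V : Type*} [Fintype V] [Nonempty V] (G : SimpleGraph V)
    [DecidableRel G.Adj]
    (hδ : (Fintype.card V : ℚ) / 2 ≤ (G.minDegree : ℚ))
    (v : V) (C : G.Walk v v) (hC : C.IsCycle)
    (hmax : ∀ (u : V) (Q : G.Walk u u), Q.IsCycle → Q.length ≤ C.length) :
    ∀ x : V, x ∈ C.support :=
  stmt_1_general G hδ v C hC hmax
end

section
/- For real numbers n, δ and integers λ, μ with μ = δ − λ + 1, the inequality δ ≥ (n+2)/(λ+1) + λ − 2 holds if and only if δ ≥ (n+2)/(μ+1) + μ − 2. -/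
/-! Clearing the denominator, `(n+2)/(λ+1) + λ - 2 ≤ δ` becomes `n + 2 ≤ (λ+1)(δ-λ+2) = (λ+1)(μ+1)`,
which is symmetric in `λ` and `μ`. -/

theorem div_add_sub_two_le_iff_le_mul {K : Type*} [Field K] [LinearOrder K] [IsStrictOrderedRing K]
    {n a b δ : K} (ha : 0 < a + 1) (hab : a + b = δ + 1) :
    n / (a + 1) + a - 2 ≤ δ ↔ n ≤ (a + 1) * (b + 1) := by
  have hb : b + 1 = δ - a + 2 := by linear_combination hab
  rw [hb, ← div_le_iff₀' ha]
  constructor <;> intro h <;> linarith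

theorem stmt_19_general (n : ℝ) (δ l μ : ℤ) (hl : 0 < l) (hμ : 0 < μ)
    (hrel : μ = δ - l + 1) :
    ((n + 2) / ((l : ℝ) + 1) + l - 2 ≤ (δ : ℝ)) ↔
      ((n + 2) / ((μ : ℝ) + 1) + μ - 2 ≤ (δ : ℝ)) := by
  have hl' : (0 : ℝ) < l + 1 := by positivity
  have hμ' : (0 : ℝ) < μ + 1 := by positivity
  have hsum : (l : ℝ) + μ = δ + 1 := by rw [hrel]; push_cast; ring
  rw [div_add_sub_two_le_iff_le_mul hl' hsum,
    div_add_sub_two_le_iff_le_mul hμ' ((add_comm _ _).trans hsum), mul_comm]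

/-- The degree condition `δ ≥ (n+2)/(λ+1) + λ − 2` is symmetric under the
substitution `μ = δ − λ + 1`. -/
theorem stmt_19 (n : ℝ) (δ l μ : ℤ) (hl : 0 < l) (hμ : 0 < μ)
    (hrel : μ = δ - l + 1) (hn : 0 < n + 2) :
    ((n + 2) / ((l : ℝ) + 1) + l - 2 ≤ (δ : ℝ)) ↔
      ((n + 2) / ((μ : ℝ) + 1) + μ - 2 ≤ (δ : ℝ)) :=
  stmt_19_general n δ l μ hl hμ hrel
end
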